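/- arXiv:math/0203236 — 4 statements merged into one kernel-verified Lean document; each statement's English description precedes it below -/
import Mathlib

section
/- Let X be a path-connected topological space and let c ∈ X. Then the inclusion of the subspace ∧^c X of free loops passing through c into the full free loop space ∧X is a weak homotopy equivalence; that is, it induces a bijection on path components, and for every γ ∈ ∧^c X and every n ≥ 1 it induces a group isomorphism π_n(∧^c X, γ) → π_n(∧X, γ) of homotopy groups. -/
open scoped unitInterval Topology

noncomputable section

/-- The subspace `∧ᶜX ⊆ ∧X = C(S¹, X)` of free loops passing through `c`. -/
abbrev FreeLoopsThrough (X : Type) [TopologicalSpace X] (c : X) : Type :=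
  {f : C(Circle, X) // c ∈ Set.range f}

/-- The inclusion `∧ᶜX ↪ ∧X` as a continuous map. -/
def freeLoopInclusion (X : Type) [TopologicalSpace X] (c : X) :
    C(FreeLoopsThrough X c, C(Circle, X)) :=
  ⟨Subtype.val, continuous_subtype_val⟩

/-- The map induced by a continuous map on path components. -/
def inducedPi0 {A B : Type} [TopologicalSpace A] [TopologicalSpace B] (g : C(A, B)) :
    ZerothHomotopy A → ZerothHomotopy B :=
  Quotient.map g fun _ _ h => Nonempty.map (fun p => p.map g.continuous) h

/-- The map induced by a continuous map on `N`-th homotopy groups. -/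
def inducedPi {A B : Type} [TopologicalSpace A] [TopologicalSpace B]
    (N : Type) (g : C(A, B)) (a : A) :
    HomotopyGroup N A a → HomotopyGroup N B (g a) :=
  Quotient.map
    (fun p => ⟨g.comp p.1, fun y hy => by
      simp [ContinuousMap.comp_apply, p.2 y hy]⟩)
    (fun _ _ h => Nonempty.map (fun H => H.compContinuousMap g) h)

/-!
A family of free loops `F a`, parametrized by a contractible space `A`, can be deformed into loops
through `c`: contractibility and path-connectedness of `X` give paths from `F a 1` to `c` depending
continuously on `a`, and a whisker growing along these paths is inserted at the base point of
`F a`. The whisker only adds points, so loops that already pass through `c` keep doing so.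

To compress a map of pairs `(I^N, ∂I^N) → (∧X, γ)` into `∧ᶜX`, first reparametrize it so that it
is constant on a collar of the boundary, then run the deformation for a time that is `1` off the
collar and `0` on the boundary. Doing this for cubes gives surjectivity on `π_n`, and for
homotopies `I × I^N → ∧X` injectivity; `π_0` is handled by the cases `A = Unit` and `A = I`.
-/

open scoped Real Topology.Homotopy

namespace unitInterval

abbrev clamp : ℝ → I := Set.projIcc 0 1 zero_le_one

@[simp] lemma clamp_coe (x : I) : clamp x = x := Set.projIcc_val zero_le_one x

@[fun_prop] lemma continuous_clamp : Continuous clamp := continuous_projIcc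

lemma clamp_of_nonpos {x : ℝ} (h : x ≤ 0) : clamp x = 0 := Set.projIcc_of_le_left _ h

lemma clamp_of_one_le {x : ℝ} (h : 1 ≤ x) : clamp x = 1 := Set.projIcc_of_right_le _ h

def toCircle : C(I, Circle) := ⟨fun u => Circle.exp (2 * π * u), by fun_prop⟩

lemma toCircle_apply (u : I) : toCircle u = Circle.exp (2 * π * u) := rfl

@[simp] lemma toCircle_zero : toCircle 0 = 1 := by simp [toCircle_apply]

@[simp] lemma toCircle_one : toCircle 1 = 1 := by simp [toCircle_apply]

lemma toCircle_surjective : Function.Surjective toCircle := by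
  intro z
  obtain ⟨θ, rfl⟩ := Circle.exp_surjective z
  refine ⟨⟨Int.fract (θ / (2 * π)), Int.fract_nonneg _, (Int.fract_lt_one _).le⟩, ?_⟩
  refine Circle.exp_eq_exp.2 ⟨-⌊θ / (2 * π)⌋, ?_⟩
  change 2 * π * Int.fract (θ / (2 * π)) = _
  rw [← Int.self_sub_floor, mul_sub, mul_div_cancel₀ _ (by positivity)]
  push_cast
  ring

lemma toCircle_injOn : Set.InjOn toCircle {u | u ≠ 1} := by
  intro u hu v hv h
  have hu' : (u : ℝ) < 1 := lt_of_le_of_ne u.2.2 fun h' => hu (Subtype.ext h')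
  have hv' : (v : ℝ) < 1 := lt_of_le_of_ne v.2.2 fun h' => hv (Subtype.ext h')
  have := Circle.exp_injOn_Ico (a := 0) (b := 2 * π) (by simp)
    ⟨by have := u.2.1; positivity, by nlinarith [Real.pi_pos]⟩
    ⟨by have := v.2.1; positivity, by nlinarith [Real.pi_pos]⟩ h
  exact Subtype.ext (mul_left_cancel₀ (by positivity) this)

lemma isQuotientMap_prodMap_toCircle (A : Type*) [TopologicalSpace A] :
    Topology.IsQuotientMap ((ContinuousMap.id A).prodMap toCircle) :=
  (isProperMap_id.prodMap toCircle.continuous.isProperMap).isClosedMap.isQuotientMap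
    (by fun_prop) (Function.surjective_id.prodMap toCircle_surjective)

variable {A X : Type*} [TopologicalSpace A]

lemma factorsThrough_prodMap_toCircle {g : A × I → X} (hg : ∀ a, g (a, 0) = g (a, 1)) :
    Function.FactorsThrough g ((ContinuousMap.id A).prodMap toCircle) := by
  set φ : I → I := fun u => if u = 1 then 0 else u
  have hφ (u : I) : φ u ≠ 1 := by by_cases hu : u = 1 <;> simp [φ, hu]
  have hgφ (a : A) (u : I) : g (a, φ u) = g (a, u) := by by_cases hu : u = 1 <;> simp [φ, hu, hg]
  have heφ (u : I) : toCircle (φ u) = toCircle u := by by_cases hu : u = 1 <;> simp [φ, hu]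
  rintro ⟨a, u⟩ ⟨b, v⟩ h
  obtain ⟨rfl, huv⟩ : a = b ∧ toCircle u = toCircle v := Prod.ext_iff.1 h
  rw [← hgφ a u, ← hgφ a v, toCircle_injOn (hφ u) (hφ v) (by rw [heφ, heφ]; exact huv)]

variable [TopologicalSpace X]

def liftToCircle (g : C(A × I, X)) (hg : ∀ a, g (a, 0) = g (a, 1)) : C(A × Circle, X) :=
  (isQuotientMap_prodMap_toCircle A).lift g (factorsThrough_prodMap_toCircle hg)

@[simp] lemma liftToCircle_apply (g : C(A × I, X)) (hg : ∀ a, g (a, 0) = g (a, 1)) (a : A)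
    (u : I) : liftToCircle g hg (a, toCircle u) = g (a, u) :=
  DFunLike.congr_fun ((isQuotientMap_prodMap_toCircle A).lift_comp g
    (factorsThrough_prodMap_toCircle hg)) (a, u)

def stretch (u x : I) : I := clamp ((1 + u) * x - u / 2)

@[fun_prop] lemma _root_.Continuous.unitInterval_stretch {α : Type*} [TopologicalSpace α]
    {f g : α → I} (hf : Continuous f) (hg : Continuous g) :
    Continuous fun a => stretch (f a) (g a) := by
  unfold unitInterval.stretch; fun_prop

@[simp] lemma stretch_zero_left (x : I) : stretch 0 x = x := by simp [stretch]

@[simp] lemma stretch_zero_right (u : I) : stretch u 0 = 0 :=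
  clamp_of_nonpos (by simp; linarith [u.2.1])

@[simp] lemma stretch_one_right (u : I) : stretch u 1 = 1 :=
  clamp_of_one_le (by simp; linarith [u.2.1])

def collar (x : I) : I := clamp (min (4 * x) (4 - 4 * x))

@[fun_prop] lemma continuous_collar : Continuous collar := by unfold collar; fun_prop

@[simp] lemma collar_zero : collar 0 = 0 := clamp_of_nonpos (by simp)

@[simp] lemma collar_one : collar 1 = 0 := clamp_of_nonpos (by simp)

lemma stretch_one_eq_zero_or_one_of_collar_ne_one {x : I} (h : collar x ≠ 1) :
    stretch 1 x = 0 ∨ stretch 1 x = 1 := by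
  by_contra! hx
  refine h (clamp_of_one_le (le_min ?_ ?_))
  · by_contra! hlt
    exact hx.1 (clamp_of_nonpos (by simp; linarith))
  · by_contra! hlt
    exact hx.2 (clamp_of_one_le (by simp; linarith))

end unitInterval

open unitInterval

namespace Cube

variable {N : Type*}

def stretch (u : I) (s : I^N) : I^N := fun i => unitInterval.stretch u (s i)

@[fun_prop] lemma _root_.Continuous.cube_stretch {α : Type*} [TopologicalSpace α] {f : α → I}
    {g : α → I^N} (hf : Continuous f) (hg : Continuous g) :
    Continuous fun a => stretch (f a) (g a) :=
  continuous_pi fun _ => by unfold Cube.stretch; fun_prop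

@[simp] lemma stretch_zero (s : I^N) : stretch 0 s = s := funext fun _ => stretch_zero_left _

lemma stretch_mem_boundary (u : I) {s : I^N} (hs : s ∈ boundary N) :
    stretch u s ∈ boundary N := by
  obtain ⟨i, hi | hi⟩ := hs
  · exact ⟨i, Or.inl (by simp [stretch, hi])⟩
  · exact ⟨i, Or.inr (by simp [stretch, hi])⟩

variable [Fintype N]

def collar (s : I^N) : I := ∏ i, unitInterval.collar (s i)

@[fun_prop] lemma continuous_collar : Continuous (collar (N := N)) := by unfold collar; fun_prop

lemma collar_eq_zero_of_mem_boundary {s : I^N} (hs : s ∈ boundary N) : collar s = 0 := by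
  obtain ⟨i, hi | hi⟩ := hs <;> exact Finset.prod_eq_zero (Finset.mem_univ i) (by simp [hi])

lemma stretch_one_mem_boundary_of_collar_ne_one {s : I^N} (h : collar s ≠ 1) :
    stretch 1 s ∈ boundary N := by
  obtain ⟨i, hi⟩ : ∃ i, unitInterval.collar (s i) ≠ 1 := by
    by_contra! hall
    exact h (Finset.prod_eq_one fun i _ => hall i)
  exact ⟨i, stretch_one_eq_zero_or_one_of_collar_ne_one hi⟩

end Cube

instance : ContractibleSpace I :=
  (convex_Icc (0 : ℝ) 1).contractibleSpace (Set.nonempty_Icc.2 zero_le_one)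

instance {ι X : Type*} [TopologicalSpace X] [ContractibleSpace X] :
    ContractibleSpace (ι → X) := by
  obtain ⟨x, ⟨H⟩⟩ := id_nullhomotopic X
  refine (contractible_iff_id_nullhomotopic _).2 ⟨fun _ => x, ⟨?_⟩⟩
  exact ⟨⟨fun q i => H (q.1, q.2 i), by fun_prop⟩, fun _ => by simp, fun _ => by simp⟩

namespace GenLoop

variable {N Z : Type*} [TopologicalSpace Z] {z : Z}

lemma homotopic_of_eq {p q : Ω^ N Z z} (G : C(I × I^N, Z)) (h₀ : ∀ s, G (0, s) = p s)
    (h₁ : ∀ s, G (1, s) = q s) (hG : ∀ t, ∀ y ∈ Cube.boundary N, G (t, y) = z) :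
    Homotopic p q :=
  ⟨⟨⟨G, h₀, h₁⟩, fun t y hy => (hG t y hy).trans (GenLoop.boundary p y hy).symm⟩⟩

def compStretch (p : Ω^ N Z z) : Ω^ N Z z :=
  ⟨p.1.comp ⟨Cube.stretch 1, by fun_prop⟩,
    fun _ hy => GenLoop.boundary p _ (Cube.stretch_mem_boundary 1 hy)⟩

lemma homotopic_compStretch (p : Ω^ N Z z) : Homotopic p (compStretch p) :=
  homotopic_of_eq (p.1.comp ⟨fun x => Cube.stretch x.1 x.2, by fun_prop⟩) (by simp)
    (fun _ => rfl) fun t _ hy => GenLoop.boundary p _ (Cube.stretch_mem_boundary t hy)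

end GenLoop

section Deformation

variable {Y : Type*} [TopologicalSpace Y]

def ContinuousMap.subtypeVal (p : Y → Prop) : C(Subtype p, Y) :=
  ⟨Subtype.val, continuous_subtype_val⟩

def DeformableInto (A : Type*) [TopologicalSpace A] (p : Y → Prop) : Prop :=
  ∀ f : C(A, Y), ∃ (g : C(A, Y)) (H : f.Homotopy g),
    (∀ a, p (g a)) ∧ ∀ t a, p (f a) → p (H (t, a))

variable {A : Type*} [TopologicalSpace A] {p : Y → Prop}

/-- The deformation of `f a` is stopped at time `w a`. -/
theorem DeformableInto.exists_homotopicRel (h : DeformableInto A p) (f : C(A, Y)) (w : C(A, I))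
    (hw : ∀ a, w a ≠ 1 → p (f a)) (S : Set A) (hS : ∀ a ∈ S, w a = 0) :
    ∃ g : C(A, Subtype p), f.HomotopicRel ((ContinuousMap.subtypeVal p).comp g) S := by
  obtain ⟨g, H, hg, hH⟩ := h f
  have mem (a : A) : p (H (w a, a)) := by
    by_cases hwa : w a = 1
    · simpa [hwa] using hg a
    · exact hH _ _ (hw a hwa)
  refine ⟨⟨fun a => ⟨H (w a, a), mem a⟩, by fun_prop⟩,
    ⟨⟨⟨⟨fun x => H (x.1 * w x.2, x.2), by fun_prop⟩, fun a => by simp,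
      fun a => by simp [ContinuousMap.subtypeVal]⟩, fun t a ha => ?_⟩⟩⟩
  simp [hS a ha]

end Deformation

section WeakEquivalence

variable {Y : Type} [TopologicalSpace Y] {p : Y → Prop}

local notation "ι" => ContinuousMap.subtypeVal p

theorem DeformableInto.inducedPi0_surjective (h : DeformableInto Unit p) :
    Function.Surjective (inducedPi0 ι) := by
  rintro ⟨y⟩
  obtain ⟨g, H, hg, -⟩ := h (.const Unit y)
  exact ⟨⟦⟨g (), hg ()⟩⟧, Quotient.sound ⟨(H.evalAt ()).symm⟩⟩

theorem DeformableInto.inducedPi0_injective (h : DeformableInto I p) :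
    Function.Injective (inducedPi0 ι) := by
  rintro ⟨γ₀⟩ ⟨γ₁⟩ hγ
  obtain ⟨q⟩ : Joined γ₀.1 γ₁.1 := Quotient.exact hγ
  obtain ⟨g, H, hg, hH⟩ := h q
  have along (a : I) (ha : p (q a)) : JoinedIn {y | p y} (q a) (g a) :=
    ⟨H.evalAt a, fun t => hH t a ha⟩
  have hγ₀ := along 0 (by simpa using γ₀.2)
  have hγ₁ := along 1 (by simpa using γ₁.2)
  simp only [Path.source, Path.target] at hγ₀ hγ₁
  exact Quotient.sound ((hγ₀.trans (⟨⟨g, rfl, rfl⟩, hg⟩ : JoinedIn _ (g 0) (g 1))).trans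
    hγ₁.symm).joined_subtype

variable {N : Type} [Fintype N] {γ : Subtype p}

theorem DeformableInto.inducedPi_surjective (h : DeformableInto (I^N) p) :
    Function.Surjective (inducedPi N ι γ) := by
  rintro ⟨q⟩
  have hw (s : I^N) (hs : Cube.collar s ≠ 1) : p ((GenLoop.compStretch q).1 s) := by
    change p (q (Cube.stretch 1 s))
    rw [GenLoop.boundary _ _ (Cube.stretch_one_mem_boundary_of_collar_ne_one hs)]
    exact γ.2
  obtain ⟨g, hg⟩ := h.exists_homotopicRel (GenLoop.compStretch q).1
    ⟨Cube.collar, by fun_prop⟩ hw (Cube.boundary N) fun _ => Cube.collar_eq_zero_of_mem_boundary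
  refine ⟨⟦⟨g, fun y hy => Subtype.ext ?_⟩⟧, Quotient.sound ?_⟩
  · exact (hg.fst_eq_snd hy).symm.trans (GenLoop.boundary _ y hy)
  · exact hg.symm.trans (GenLoop.homotopic_compStretch q).symm

theorem DeformableInto.homotopic_compStretch (h : DeformableInto (I × I^N) p)
    {v₀ v₁ : Ω^ N (Subtype p) γ}
    (G : (ContinuousMap.comp ι v₀.1).HomotopyRel (ContinuousMap.comp ι v₁.1) (Cube.boundary N)) :
    GenLoop.Homotopic (GenLoop.compStretch v₀) (GenLoop.compStretch v₁) := by
  let f : C(I × I^N, Y) := G.toContinuousMap.comp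
    ⟨fun x => (stretch 1 x.1, Cube.stretch 1 x.2), by fun_prop⟩
  let w : C(I × I^N, I) := ⟨fun x => collar x.1 * Cube.collar x.2, by fun_prop⟩
  have hw (x : I × I^N) (hx : w x ≠ 1) : p (f x) := by
    obtain ⟨t, s⟩ := x
    change p (G (stretch 1 t, Cube.stretch 1 s))
    by_cases hs : Cube.collar s = 1
    · have ht : collar t ≠ 1 := fun ht => hx (by simp [w, ht, hs])
      rcases stretch_one_eq_zero_or_one_of_collar_ne_one ht with h0 | h1
      · rw [h0, G.apply_zero]; exact (v₀ _).2
      · rw [h1, G.apply_one]; exact (v₁ _).2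
    · rw [G.eq_fst _ (Cube.stretch_one_mem_boundary_of_collar_ne_one hs)]; exact (v₀ _).2
  obtain ⟨g, hg⟩ := h.exists_homotopicRel f w hw {x | w x = 0} fun _ => id
  have hgf (x : I × I^N) (hx : w x = 0) : (g x : Y) = f x := (hg.fst_eq_snd hx).symm
  refine GenLoop.homotopic_of_eq g (fun s => Subtype.ext ?_) (fun s => Subtype.ext ?_)
    fun t y hy => Subtype.ext ?_
  · rw [hgf _ (by simp [w])]
    change G (stretch 1 0, _) = _
    rw [stretch_zero_right, G.apply_zero]
    rfl
  · rw [hgf _ (by simp [w])]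
    change G (stretch 1 1, _) = _
    rw [stretch_one_right, G.apply_one]
    rfl
  · rw [hgf _ (by simp [w, Cube.collar_eq_zero_of_mem_boundary hy])]
    change G (stretch 1 t, Cube.stretch 1 y) = γ
    rw [G.eq_fst _ (Cube.stretch_mem_boundary 1 hy)]
    exact congrArg Subtype.val (GenLoop.boundary v₀ _ (Cube.stretch_mem_boundary 1 hy))

theorem DeformableInto.inducedPi_injective (h : DeformableInto (I × I^N) p) :
    Function.Injective (inducedPi N ι γ) := by
  rintro ⟨v₀⟩ ⟨v₁⟩ hv
  obtain ⟨G⟩ : GenLoop.Homotopic _ _ := Quotient.exact hv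
  exact Quotient.sound (((GenLoop.homotopic_compStretch v₀).trans
    (h.homotopic_compStretch G)).trans (GenLoop.homotopic_compStretch v₁).symm)

end WeakEquivalence

theorem inducedPi_mul {A B N : Type} [TopologicalSpace A] [TopologicalSpace B] [DecidableEq N]
    [Nonempty N] (g : C(A, B)) (a : A) (x y : HomotopyGroup N A a) :
    inducedPi N g a (x * y) = inducedPi N g a x * inducedPi N g a y := by
  induction x using Quotient.inductionOn with | h p => ?_
  induction y using Quotient.inductionOn with | h q => ?_
  let i := Classical.arbitrary N
  have hmap (r : Ω^ N A a) : inducedPi N g a ⟦r⟧ =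
      ⟦⟨g.comp r.1, fun y hy => by simp [GenLoop.boundary r y hy]⟩⟧ := rfl
  refine (congrArg (inducedPi N g a) (HomotopyGroup.mul_spec (i := i))).trans ?_
  rw [hmap, hmap, hmap]
  refine Eq.trans ?_ (HomotopyGroup.mul_spec (i := i)).symm
  congr 1
  ext y
  show g (GenLoop.transAt i q p y) = _
  simp only [GenLoop.transAt, GenLoop.coe_copy]
  split_ifs <;> rfl

section Whisker

variable {A X : Type*} [TopologicalSpace A] [TopologicalSpace X]

/-- On `[0, t / 2]` the loop at time `t` runs along `R (·, a)` from `F a 1` to `R (t, a)` and back;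
on `[t / 2, 1]` it traverses `F a`. -/
def whiskeredLoops (F : C(A, C(Circle, X))) (R : C(I × A, X)) (hR₀ : ∀ a, R (0, a) = F a 1) :
    C((I × A) × I, X) where
  toFun x := if (x.2 : ℝ) ≤ x.1.1 / 2
    then R (clamp (min (4 * x.2) (2 * x.1.1 - 4 * x.2)), x.1.2)
    else F x.1.2 (toCircle (clamp ((x.2 - x.1.1 / 2) / (1 - x.1.1 / 2))))
  continuous_toFun := by
    have hpos (t : I) : (1 : ℝ) - t / 2 ≠ 0 := by linarith [t.2.2]
    refine Continuous.if_le (by fun_prop) ?_ (by fun_prop) (by fun_prop) ?_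
    · fun_prop (disch := exact fun x => hpos _)
    · rintro ⟨⟨t, a⟩, u⟩ (h : (u : ℝ) = t / 2)
      dsimp only
      rw [h, sub_self, zero_div, clamp_of_nonpos le_rfl,
        clamp_of_nonpos ((min_le_right _ _).trans (by linarith)), hR₀]
      simp

variable {F : C(A, C(Circle, X))} {R : C(I × A, X)} {hR₀ : ∀ a, R (0, a) = F a 1}

lemma whiskeredLoops_apply (t : I) (a : A) (u : I) :
    whiskeredLoops F R hR₀ ((t, a), u) =
      if (u : ℝ) ≤ t / 2 then R (clamp (min (4 * u) (2 * t - 4 * u)), a)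
      else F a (toCircle (clamp ((u - t / 2) / (1 - t / 2)))) := rfl

lemma whiskeredLoops_apply_zero_right (t : I) (a : A) :
    whiskeredLoops F R hR₀ ((t, a), 0) = F a 1 := by
  rw [whiskeredLoops_apply, if_pos (by simp; linarith [t.2.1]), clamp_of_nonpos (by simp), hR₀]

lemma whiskeredLoops_apply_one_right (t : I) (a : A) :
    whiskeredLoops F R hR₀ ((t, a), 1) = F a 1 := by
  rw [whiskeredLoops_apply, if_neg (by simp; linarith [t.2.2]),
    clamp_of_one_le (by rw [one_le_div (by linarith [t.2.2])]; simp), toCircle_one]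

lemma whiskeredLoops_apply_zero_left (a : A) (u : I) :
    whiskeredLoops F R hR₀ ((0, a), u) = F a (toCircle u) := by
  rw [whiskeredLoops_apply]
  split_ifs with hu
  · obtain rfl : u = 0 := Subtype.ext (le_antisymm (by simpa using hu) u.2.1)
    rw [clamp_of_nonpos (by simp), hR₀, toCircle_zero]
  · simp

lemma whiskeredLoops_apply_one_quarter (a : A) :
    whiskeredLoops F R hR₀ ((1, a), clamp (1 / 4)) = R (1, a) := by
  have : ((clamp (1 / 4) : I) : ℝ) = 1 / 4 := by
    rw [Set.coe_projIcc]; norm_num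
  rw [whiskeredLoops_apply, this, if_pos (by norm_num), ← clamp_coe 1]
  norm_num

lemma exists_whiskeredLoops_eq (t : I) (a : A) (w : I) :
    ∃ u, whiskeredLoops F R hR₀ ((t, a), u) = F a (toCircle w) := by
  rcases eq_or_ne w 0 with rfl | hw0
  · exact ⟨0, by rw [whiskeredLoops_apply_zero_right, toCircle_zero]⟩
  have hw : (0 : ℝ) < w := lt_of_le_of_ne w.2.1 fun h => hw0 (Subtype.ext h.symm)
  have ht : (0 : ℝ) < 1 - t / 2 := by linarith [t.2.2]
  have hmem : (t : ℝ) / 2 + w * (1 - t / 2) ∈ I :=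
    ⟨by nlinarith [t.2.1], by nlinarith [w.2.2]⟩
  refine ⟨⟨_, hmem⟩, ?_⟩
  have hw' : ((t : ℝ) / 2 + w * (1 - t / 2) - t / 2) / (1 - t / 2) = w := by
    rw [add_sub_cancel_left, mul_div_assoc, div_self ht.ne', mul_one]
  rw [whiskeredLoops_apply, if_neg (by simp only; nlinarith), hw', clamp_coe]

end Whisker

section LoopsThrough

variable {A X : Type*} [TopologicalSpace A] [TopologicalSpace X]

theorem exists_homotopy_to_loops_through (c : X) (F : C(A, C(Circle, X))) (R : C(I × A, X))
    (hR₀ : ∀ a, R (0, a) = F a 1) (hR₁ : ∀ a, R (1, a) = c) :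
    ∃ (G : C(A, C(Circle, X))) (H : F.Homotopy G), (∀ a, c ∈ Set.range (G a)) ∧
      ∀ t a, Set.range (F a) ⊆ Set.range (H (t, a)) := by
  have hloop (x : I × A) : whiskeredLoops F R hR₀ (x, 0) = whiskeredLoops F R hR₀ (x, 1) := by
    rw [whiskeredLoops_apply_zero_right, whiskeredLoops_apply_one_right]
  let H := (liftToCircle (whiskeredLoops F R hR₀) hloop).curry
  have hH (t : I) (a : A) (u : I) : H (t, a) (toCircle u) = whiskeredLoops F R hR₀ ((t, a), u) :=
    liftToCircle_apply _ hloop (t, a) u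
  have hH₀ (a : A) : H (0, a) = F a := by
    ext z
    obtain ⟨u, rfl⟩ := toCircle_surjective z
    rw [hH, whiskeredLoops_apply_zero_left]
  refine ⟨⟨fun a => H (1, a), by fun_prop⟩, ⟨H, hH₀, fun _ => rfl⟩,
    fun a => ⟨toCircle (clamp (1 / 4)), ?_⟩, ?_⟩
  · change H (1, a) _ = c
    rw [hH, whiskeredLoops_apply_one_quarter, hR₁]
  · rintro t a _ ⟨z, rfl⟩
    obtain ⟨w, rfl⟩ := toCircle_surjective z
    obtain ⟨u, hu⟩ := exists_whiskeredLoops_eq (hR₀ := hR₀) t a w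
    exact ⟨toCircle u, by rw [← hu]; exact hH t a u⟩

theorem ContinuousMap.homotopic_const_of_contractibleSpace [ContractibleSpace A]
    [PathConnectedSpace X] (g : C(A, X)) (x : X) : g.Homotopic (.const A x) := by
  obtain ⟨y, hy⟩ := (id_nullhomotopic A).comp_right g
  exact hy.trans ⟨(PathConnectedSpace.somePath y x).toHomotopyConst⟩

theorem deformableInto_mem_range [ContractibleSpace A] [PathConnectedSpace X] (c : X) :
    DeformableInto A (fun f : C(Circle, X) => c ∈ Set.range f) := by
  intro F
  obtain ⟨R⟩ :=
    ContinuousMap.homotopic_const_of_contractibleSpace ⟨fun a => F a 1, by fun_prop⟩ c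
  obtain ⟨G, H, hG, hH⟩ := exists_homotopy_to_loops_through c F R.toContinuousMap
    (fun a => R.apply_zero a) (fun a => R.apply_one a)
  exact ⟨G, H, hG, fun t a ha => hH t a ha⟩

end LoopsThrough

/-- For a path-connected space `X` and `c ∈ X`, the inclusion `∧ᶜX ↪ ∧X` is a weak
homotopy equivalence: it induces a bijection on path components and, for every
`γ ∈ ∧ᶜX` and every `n ≥ 1` (written `n + 1`), a group isomorphism
`π_n(∧ᶜX, γ) → π_n(∧X, γ)`. -/
theorem freeLoopInclusion_weak_homotopy_equivalence
    (X : Type) [TopologicalSpace X] [PathConnectedSpace X] (c : X) :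
    Function.Bijective (inducedPi0 (freeLoopInclusion X c)) ∧
    ∀ (γ : FreeLoopsThrough X c) (n : ℕ),
      Function.Bijective (inducedPi (Fin (n + 1)) (freeLoopInclusion X c) γ) ∧
      ∀ a b : HomotopyGroup (Fin (n + 1)) (FreeLoopsThrough X c) γ,
        inducedPi (Fin (n + 1)) (freeLoopInclusion X c) γ (a * b) =
          inducedPi (Fin (n + 1)) (freeLoopInclusion X c) γ a *
            inducedPi (Fin (n + 1)) (freeLoopInclusion X c) γ b := by
  have hdef (A : Type) [TopologicalSpace A] [ContractibleSpace A] :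
      DeformableInto A (fun f : C(Circle, X) => c ∈ Set.range f) :=
    deformableInto_mem_range c
  refine ⟨⟨(hdef I).inducedPi0_injective, (hdef Unit).inducedPi0_surjective⟩, fun γ n => ?_⟩
  exact ⟨⟨(hdef _).inducedPi_injective, (hdef _).inducedPi_surjective⟩, inducedPi_mul _ γ⟩
end
end

section
/- Let X be a path-connected topological space and let b, c ∈ X. Then the space Ω_b^c X of loops based at b and passing through the point c is homotopy equivalent to the ordinary based loop space Ω_b X; that is, there exist continuous maps Ω_b^c X → Ω_b X and Ω_b X → Ω_b^c X whose two composites are homotopic to the respective identity maps. -/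
/-!
Fix a path `p` from `b` to `c`. Reparametrising a loop `γ` to `γ · refl` and then letting the
constant tail grow into the loop that runs along `p` up to time `t` and back deforms the whole
loop space into the loops through `c`, and no stage of the deformation loses a point of the
range of `γ`. A deformation of a space into a subspace that keeps the subspace invariant makes
the inclusion a homotopy equivalence.
-/

open scoped unitInterval
open ContinuousMap Set

section Deformation

variable {Y : Type*} [TopologicalSpace Y]

def ContinuousMap.HomotopyEquiv.ofDeformationInto {S : Set Y} {r : C(Y, Y)} (hr : ∀ y, r y ∈ S)
    (F : HomotopyWith (ContinuousMap.id Y) r fun f => MapsTo f S S) : S ≃ₕ Y where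
  toFun := ⟨Subtype.val, continuous_subtype_val⟩
  invFun := ⟨fun y => ⟨r y, hr y⟩, r.continuous.subtype_mk hr⟩
  left_inv := ⟨Homotopy.symm
    { toFun := fun q => ⟨F (q.1, q.2), F.prop q.1 q.2.2⟩
      continuous_toFun := by fun_prop
      map_zero_left := fun y => by simp
      map_one_left := fun y => by simp [ContinuousMap.comp] }⟩
  right_inv := ⟨F.toHomotopy.symm⟩

end Deformation

namespace Path

variable {X : Type*} [TopologicalSpace X] {x y z : X}

theorem range_delayReflRight (θ : I) (γ : Path x y) : range (delayReflRight θ γ) = range γ := by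
  refine (range_comp_subset_range _ γ).antisymm ?_
  rintro _ ⟨s, rfl⟩
  have hq : Continuous fun t => unitInterval.qRight (t, θ) := by fun_prop
  obtain ⟨t, ht⟩ := intermediate_value_univ 0 1 hq
    (show s ∈ Icc _ _ by
      simp [unitInterval.qRight_zero_left, unitInterval.qRight_one_left, unitInterval.le_one'])
  exact ⟨t, congr_arg γ ht⟩

noncomputable def tentLoop (p : Path y z) (t : I) : Path y y where
  toFun s := p.extend (t * min (2 * (s : ℝ)) (2 - 2 * s))
  continuous_toFun := by fun_prop
  source' := by simp
  target' := by norm_num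

theorem continuous_tentLoop (p : Path y z) : Continuous p.tentLoop :=
  continuous_uncurry_iff.mp <| p.continuous_extend.comp <| by fun_prop

@[simp]
theorem tentLoop_zero (p : Path y z) : p.tentLoop 0 = refl y := by
  ext; simp [tentLoop]

theorem mem_range_tentLoop_one (p : Path y z) : z ∈ range (p.tentLoop 1) :=
  ⟨⟨1 / 2, by norm_num, by norm_num⟩, by norm_num [tentLoop]⟩

noncomputable def transRight (δ : Path y z) : C(Path x y, Path x z) :=
  ⟨fun γ => γ.trans δ, by fun_prop⟩

def passingThrough (x y c : X) : Set (Path x y) := {γ | c ∈ range γ}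

noncomputable def homotopyTransRefl (c : X) :
    HomotopyWith (ContinuousMap.id (Path x y)) (transRight (refl y))
      fun f => MapsTo f (passingThrough x y c) (passingThrough x y c) :=
  HomotopyWith.symm
    { toFun := fun q => delayReflRight q.1 q.2
      continuous_toFun := continuous_delayReflRight
      map_zero_left := delayReflRight_zero
      map_one_left := delayReflRight_one
      prop' := fun θ γ (hγ : c ∈ range γ) =>
        show c ∈ range (delayReflRight θ γ) by rwa [range_delayReflRight] }

noncomputable def homotopyTransTentLoop (c : X) (p : Path y z) :
    HomotopyWith (transRight (refl y) : C(Path x y, Path x y)) (transRight (p.tentLoop 1))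
      fun f => MapsTo f (passingThrough x y c) (passingThrough x y c) where
  toFun q := q.2.trans (p.tentLoop q.1)
  continuous_toFun := continuous_snd.path_trans <| p.continuous_tentLoop.comp continuous_fst
  map_zero_left γ := by simp [transRight]
  map_one_left _ := rfl
  prop' t γ (hγ : c ∈ range γ) :=
    show c ∈ range (γ.trans (p.tentLoop t)) by rw [trans_range]; exact Or.inl hγ

noncomputable def passingThroughHomotopyEquiv (p : Path y z) :
    passingThrough y y z ≃ₕ Path y y :=
  .ofDeformationInto (r := transRight (p.tentLoop 1))
    (fun γ => show z ∈ range (γ.trans (p.tentLoop 1)) by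
      rw [trans_range]; exact Or.inr p.mem_range_tentLoop_one)
    ((homotopyTransRefl z).trans (homotopyTransTentLoop z p))

end Path

/-- For a path-connected space `X` and points `b c : X`, the space `Ω_b^c X` of
loops based at `b` passing through `c` is homotopy equivalent to the based loop
space `Ω_b X`: there are continuous maps in both directions whose composites are
homotopic to the identities. -/
theorem loopsThrough_homotopyEquiv_loopSpace
    (X : Type) [TopologicalSpace X] [PathConnectedSpace X] (b c : X) :
    ∃ (f : C({γ : Path b b // c ∈ Set.range γ}, Path b b))
      (g : C(Path b b, {γ : Path b b // c ∈ Set.range γ})),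
      (f.comp g).Homotopic (ContinuousMap.id (Path b b)) ∧
      (g.comp f).Homotopic (ContinuousMap.id {γ : Path b b // c ∈ Set.range γ}) := by
  let e := Path.passingThroughHomotopyEquiv (PathConnectedSpace.somePath b c)
  exact ⟨e.toFun, e.invFun, e.right_inv, e.left_inv⟩
end

section
/- Let X be a topological space and c ∈ X. The evaluation map ev : ∧^c X → X, ev(f) = f(1) (evaluation at the distinguished point 1 ∈ S¹), is a Hurewicz fibration: for every topological space Y, every continuous map F : Y → ∧^c X, and every continuous homotopy H : Y × [0,1] → X with H(y,0) = ev(F(y)) for all y ∈ Y, there exists a continuous homotopy H̃ : Y × [0,1] → ∧^c X such that H̃(y,0) = F(y) and ev(H̃(y,t)) = H(y,t) for all y ∈ Y and t ∈ [0,1]. -/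
open scoped unitInterval Real
open Topology

/-! The lift at time `t` of a loop `f = F y` is `f` conjugated by the path `H (y, ·)` on `[0, t]`:
parametrising the circle by `s ↦ exp (2πis)`, it runs along `H (y, ·)` from `H (y, t)` back to
`H (y, 0) = f 1` for `s ∈ [0, t/3]`, traverses `f` (affinely reparametrised) for
`s ∈ [t/3, 1 - t/3]`, and returns along `H (y, ·)` to `H (y, t)`. At `t = 0` the end arcs are
empty, so the lift starts at `f`, and its image always contains that of `f`, so it stays among
the loops through `c`. Continuity can be checked on `(Y × I) × I`, since `I → S¹` is proper
(compact source), hence so is its product with `id`, which is therefore a quotient map. -/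

namespace FreeLoopFibration

noncomputable def loopParam : C(I, Circle) := ⟨fun s => Circle.exp (2 * π * s), by fun_prop⟩

@[simp] lemma loopParam_zero : loopParam 0 = 1 := by simp [loopParam]

@[simp] lemma loopParam_one : loopParam 1 = 1 := by simp [loopParam]

lemma surjective_loopParam : Function.Surjective loopParam := by
  have hper : Function.Periodic (fun x : ℝ => Circle.exp (2 * π * x)) 1 := by
    intro x; simp only [mul_add, mul_one, Circle.exp_add_two_pi]
  intro z
  obtain ⟨x, rfl⟩ := Circle.exp_surjective z
  obtain ⟨s, hs, hxs⟩ := hper.exists_mem_Ico₀ one_pos (x / (2 * π))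
  refine ⟨⟨s, hs.1, hs.2.le⟩, ?_⟩
  rw [loopParam, ContinuousMap.coe_mk, ← hxs, mul_div_cancel₀ _ (by positivity)]

def endDist (s : I) : ℝ := min (s : ℝ) (1 - s)

lemma endDist_nonneg (s : I) : 0 ≤ endDist s := le_min s.2.1 (sub_nonneg.2 s.2.2)

@[fun_prop]
lemma continuous_endDist : Continuous endDist := by
  unfold endDist; fun_prop

@[simp] lemma endDist_zero : endDist 0 = 0 := by simp [endDist]

lemma eq_or_endDist_eq_zero_of_loopParam_eq {s s' : I} (h : loopParam s = loopParam s') :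
    s = s' ∨ endDist s = 0 ∧ endDist s' = 0 := by
  obtain ⟨m, hm⟩ := Circle.exp_eq_exp.1 h
  have hm' : (s : ℝ) = s' + m := by
    have := Real.pi_pos
    apply mul_left_cancel₀ (by positivity : (2 * π) ≠ 0)
    linarith
  obtain ⟨hs0, hs1⟩ := s.2
  obtain ⟨hs0', hs1'⟩ := s'.2
  have hlo : -1 ≤ m := by exact_mod_cast (show (-1 : ℝ) ≤ m by linarith)
  have hhi : m ≤ 1 := by exact_mod_cast (show (m : ℝ) ≤ 1 by linarith)
  interval_cases m
  · right
    have h0 : (s : ℝ) = 0 := by push_cast at hm'; linarith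
    have h1 : (s' : ℝ) = 1 := by push_cast at hm'; linarith
    simp [endDist, h0, h1]
  · left; ext; simpa using hm'
  · right
    have h1 : (s : ℝ) = 1 := by push_cast at hm'; linarith
    have h0 : (s' : ℝ) = 0 := by push_cast at hm'; linarith
    simp [endDist, h0, h1]

lemma isQuotientMap_prodMap_id_loopParam (Z : Type*) [TopologicalSpace Z] :
    IsQuotientMap ((ContinuousMap.id Z).prodMap loopParam) := by
  have hproper : IsProperMap ((ContinuousMap.id Z).prodMap loopParam) :=
    isProperMap_id.prodMap loopParam.continuous.isProperMap
  exact hproper.isClosedMap.isQuotientMap hproper.continuous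
    (Function.surjective_id.prodMap surjective_loopParam)

/-- The increasing affine bijection of `[t/3, 1 - t/3]` onto `I`, extended by `0` and `1` on the
two end arcs. -/
noncomputable def reparam (t s : I) : I :=
  Set.projIcc 0 1 zero_le_one ((3 * s - t) / (3 - 2 * t))

lemma three_sub_two_mul_pos (t : I) : (0 : ℝ) < 3 - 2 * t := by linarith [t.2.2]

lemma continuous_reparam : Continuous fun p : I × I => reparam p.1 p.2 := by
  refine continuous_projIcc.comp (Continuous.div (by fun_prop) (by fun_prop) fun p => ?_)
  exact (three_sub_two_mul_pos p.1).ne'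

@[simp] lemma reparam_zero_left (s : I) : reparam 0 s = s := by
  simp [reparam]

lemma loopParam_reparam_of_le {t s : I} (h : 3 * endDist s ≤ t) :
    loopParam (reparam t s) = 1 := by
  have hd := three_sub_two_mul_pos t
  rcases min_le_iff.1 (show min (s : ℝ) (1 - s) ≤ t / 3 by unfold endDist at h; linarith)
    with hs | hs
  · have : reparam t s = 0 :=
      Set.projIcc_of_le_left _ (div_nonpos_of_nonpos_of_nonneg (by linarith) hd.le)
    rw [this, loopParam_zero]
  · have : reparam t s = 1 := Set.projIcc_of_right_le _ (by rw [le_div_iff₀ hd]; linarith)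
    rw [this, loopParam_one]

lemma exists_reparam_eq (t r : I) : ∃ s : I, t ≤ 3 * endDist s ∧ reparam t s = r := by
  have hd := three_sub_two_mul_pos t
  obtain ⟨ht0, ht1⟩ := t.2
  obtain ⟨hr0, hr1⟩ := r.2
  set s : ℝ := t / 3 + r * (1 - 2 * t / 3) with hs
  have hs0 : t / 3 ≤ s := by nlinarith
  have hs1 : s ≤ 1 - t / 3 := by nlinarith
  refine ⟨⟨s, by linarith, by linarith⟩, ?_, ?_⟩
  · simp only [endDist]
    linarith [le_min hs0 (show t / 3 ≤ 1 - s by linarith)]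
  · have hq : (3 * s - t) / (3 - 2 * t) = r := by
      rw [div_eq_iff hd.ne', hs]; ring
    simp only [reparam, hq, Set.projIcc_val]

section Lift

variable {X Y : Type*} [TopologicalSpace X] [TopologicalSpace Y]
  (F : C(Y, C(Circle, X))) (H : C(Y × I, X))

noncomputable def liftParam (y : Y) (t s : I) : X :=
  if 3 * endDist s ≤ t then H (y, Set.projIcc 0 1 zero_le_one (t - 3 * endDist s))
  else F y (loopParam (reparam t s))

variable {F H}

lemma homotopy_eq_loop_on_seam (h0 : ∀ y, H (y, 0) = F y 1) {y : Y} {t s : I}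
    (h : 3 * endDist s = t) :
    H (y, Set.projIcc 0 1 zero_le_one (t - 3 * endDist s)) = F y (loopParam (reparam t s)) := by
  rw [loopParam_reparam_of_le h.le, h, sub_self, ← h0]
  congr
  simp

lemma liftParam_of_le (h0 : ∀ y, H (y, 0) = F y 1) {y : Y} {t s : I} (h : t ≤ 3 * endDist s) :
    liftParam F H y t s = F y (loopParam (reparam t s)) := by
  unfold liftParam
  split_ifs with hle
  · exact homotopy_eq_loop_on_seam h0 (le_antisymm hle h)
  · rfl

lemma liftParam_zero_left (h0 : ∀ y, H (y, 0) = F y 1) (y : Y) (s : I) :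
    liftParam F H y 0 s = F y (loopParam s) := by
  rw [liftParam_of_le h0 (by simpa using endDist_nonneg s), reparam_zero_left]

lemma liftParam_zero_right (y : Y) (t : I) : liftParam F H y t 0 = H (y, t) := by
  simp [liftParam, t.2.1]

lemma continuous_liftParam (h0 : ∀ y, H (y, 0) = F y 1) :
    Continuous fun p : (Y × I) × I => liftParam F H p.1.1 p.1.2 p.2 := by
  refine Continuous.if_le ?_ ?_ (by fun_prop) (by fun_prop)
    fun p hp => homotopy_eq_loop_on_seam h0 hp
  · fun_prop
  · have hloop : Continuous fun p : (Y × I) × I => F p.1.1 :=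
      F.continuous.comp (continuous_fst.comp continuous_fst)
    have hpoint : Continuous fun p : (Y × I) × I => loopParam (reparam p.1.2 p.2) :=
      loopParam.continuous.comp
        (continuous_reparam.comp ((continuous_snd.comp continuous_fst).prodMk continuous_snd))
    exact hloop.eval hpoint

lemma factorsThrough_liftParam :
    Function.FactorsThrough (fun p : (Y × I) × I => liftParam F H p.1.1 p.1.2 p.2)
      ((ContinuousMap.id (Y × I)).prodMap loopParam) := by
  rintro ⟨⟨y, t⟩, s⟩ ⟨⟨y', t'⟩, s'⟩ h
  simp only [ContinuousMap.prodMap_apply, Prod.map, ContinuousMap.id_apply, Prod.mk.injEq] at h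
  obtain ⟨⟨rfl, rfl⟩, hs⟩ := h
  rcases eq_or_endDist_eq_zero_of_loopParam_eq hs with rfl | ⟨hs, hs'⟩
  · rfl
  · simp only [liftParam, hs, hs', mul_zero, if_pos t.2.1]

variable (F H) in
noncomputable def liftLoops (h0 : ∀ y, H (y, 0) = F y 1) : C(Y × I, C(Circle, X)) :=
  ((isQuotientMap_prodMap_id_loopParam (Y × I)).lift ⟨_, continuous_liftParam h0⟩
    factorsThrough_liftParam).curry

lemma liftLoops_apply_loopParam (h0 : ∀ y, H (y, 0) = F y 1) (y : Y) (t s : I) :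
    liftLoops F H h0 (y, t) (loopParam s) = liftParam F H y t s :=
  DFunLike.congr_fun ((isQuotientMap_prodMap_id_loopParam (Y × I)).lift_comp _ _) ((y, t), s)

theorem exists_homotopy_lift (h0 : ∀ y, H (y, 0) = F y 1) :
    ∃ G : C(Y × I, C(Circle, X)), (∀ y, G (y, 0) = F y) ∧
      (∀ y t, G (y, t) 1 = H (y, t)) ∧ ∀ y t, Set.range (F y) ⊆ Set.range (G (y, t)) := by
  refine ⟨liftLoops F H h0, fun y => ?_, fun y t => ?_, fun y t => ?_⟩
  · ext z
    obtain ⟨s, rfl⟩ := surjective_loopParam z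
    rw [liftLoops_apply_loopParam, liftParam_zero_left h0]
  · rw [← loopParam_zero, liftLoops_apply_loopParam, liftParam_zero_right]
  · rintro _ ⟨z, rfl⟩
    obtain ⟨r, rfl⟩ := surjective_loopParam z
    obtain ⟨s, hs, rfl⟩ := exists_reparam_eq t r
    exact ⟨loopParam s, by rw [liftLoops_apply_loopParam, liftParam_of_le h0 hs]⟩

end Lift

end FreeLoopFibration

/-- The evaluation map `ev : ∧ᶜX → X`, `ev(f) = f(1)`, from the space of free loops
passing through `c` (a subspace of `C(S¹, X)` with the compact-open topology) is a
Hurewicz fibration: every homotopy into `X` whose initial stage lifts along `ev`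
lifts to a homotopy into `∧ᶜX`. -/
theorem freeLoopsThrough_eval_hurewicz_fibration
    (X : Type) [TopologicalSpace X] (c : X)
    (Y : Type) [TopologicalSpace Y]
    (F : C(Y, {f : C(Circle, X) // c ∈ Set.range f}))
    (H : C(Y × I, X))
    (h0 : ∀ y : Y, H (y, 0) = (F y).1 1) :
    ∃ Htilde : C(Y × I, {f : C(Circle, X) // c ∈ Set.range f}),
      (∀ y : Y, Htilde (y, 0) = F y) ∧
      ∀ (y : Y) (t : I), (Htilde (y, t)).1 1 = H (y, t) := by
  obtain ⟨G, hG_zero, hG_one, hG_range⟩ :=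
    FreeLoopFibration.exists_homotopy_lift
      (F := ⟨fun y => (F y).1, by fun_prop⟩) h0
  exact ⟨⟨fun w => ⟨G w, hG_range w.1 w.2 (F w.1).2⟩, G.continuous.subtype_mk _⟩,
    fun y => Subtype.ext (hG_zero y), hG_one⟩
end

section
/- Let X be a topological space and b ∈ X. For α ∈ ℝ/ℤ and a loop φ based at b, define T₁(α, φ) : S¹ → X by T₁(α, φ)(exp(2πiu)) = φ(u + α mod 1) for u ∈ [0,1]. Then T₁(α, φ) is a well-defined continuous free loop, and the resulting map T₁ : (ℝ/ℤ) × Ω_b X → ∧X is continuous (where ∧X carries the compact-open topology and (ℝ/ℤ) × Ω_b X the product topology). -/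
/-!
Lifted along the open quotient map `id × (ℝ → ℝ/ℤ)`, the map `(φ, t) ↦ φ((t + α) mod 1)` becomes
`(φ, t) ↦ φ.extend (fract t)`, which is jointly continuous because `φ 0 = φ 1`. Identifying `S¹`
with `ℝ/ℤ` and currying (the exponential law for the compact-open topology) gives `T₁`.
-/

open Function Set Real

namespace AddCircle

theorem liftIco_one_zero_coe_eq_fract {B : Type*} (f : ℝ → B) (t : ℝ) :
    liftIco 1 0 f (t : AddCircle (1 : ℝ)) = f (Int.fract t) := by
  rw [← coe_fract t, liftIco_zero_coe_apply ⟨Int.fract_nonneg t, Int.fract_lt_one t⟩]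

theorem continuous_liftIco_one_zero_uncurry {Y B : Type*} [TopologicalSpace Y]
    [TopologicalSpace B] {f : Y → ℝ → B} (hf : ContinuousOn (uncurry f) (univ ×ˢ Icc 0 1))
    (hper : ∀ y, f y 0 = f y 1) :
    Continuous fun p : Y × AddCircle (1 : ℝ) => liftIco 1 0 (f p.1) p.2 := by
  rw [← (IsOpenQuotientMap.id.prodMap QuotientAddGroup.isOpenQuotientMap_mk).continuous_comp_iff]
  simpa only [comp_def, Prod.map, id, liftIco_one_zero_coe_eq_fract] using hf.comp_fract' hper

theorem homeomorphCircle_symm_exp {T : ℝ} (hT : T ≠ 0) (u : ℝ) :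
    (homeomorphCircle hT).symm (Circle.exp (2 * π / T * u)) = u :=
  (Homeomorph.symm_apply_eq _).2 (by rw [homeomorphCircle_apply, toCircle_apply_mk])

end AddCircle

namespace Path

variable {X : Type*} [TopologicalSpace X] {x : X}

theorem continuous_liftIco_extend :
    Continuous fun p : Path x x × AddCircle (1 : ℝ) => AddCircle.liftIco 1 0 p.1.extend p.2 :=
  AddCircle.continuous_liftIco_one_zero_uncurry (f := fun γ : Path x x => γ.extend)
    (Continuous.pathExtend (continuous_uncurry_iff.mpr continuous_fst) continuous_snd).continuousOn
    (fun γ => by simp)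

variable (X x) in
noncomputable def loopRotation : C(AddCircle (1 : ℝ) × Path x x, C(Circle, X)) :=
  ContinuousMap.curry
    ⟨fun q => AddCircle.liftIco 1 0 q.1.2.extend
        ((AddCircle.homeomorphCircle one_ne_zero).symm q.2 + q.1.1),
      continuous_liftIco_extend.comp <| continuous_fst.snd.prodMk <|
        ((AddCircle.homeomorphCircle one_ne_zero).symm.continuous.comp continuous_snd).add
          continuous_fst.fst⟩

theorem loopRotation_apply_exp (α : AddCircle (1 : ℝ)) (γ : Path x x) (u : ℝ) :
    loopRotation X x (α, γ) (Circle.exp (2 * π * u)) =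
      AddCircle.liftIco 1 0 γ.extend ((u : AddCircle (1 : ℝ)) + α) := by
  simpa [loopRotation] using congrArg (fun θ => AddCircle.liftIco 1 0 γ.extend (θ + α))
    (AddCircle.homeomorphCircle_symm_exp one_ne_zero u)

end Path

/-- The reparametrization action `T₁ : (ℝ/ℤ) × Ω_b X → ∧X`:
`T₁(α, φ)(exp(2πiu)) = φ((u + α) mod 1)` is a well-defined continuous free loop,
and `T₁` is continuous for the compact-open topology on `∧X = C(S¹, X)` and the
product topology on `(ℝ/ℤ) × Ω_b X`. -/
theorem reparametrization_trace_continuous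
    (X : Type) [TopologicalSpace X] (b : X) :
    ∃ T : C(AddCircle (1 : ℝ) × Path b b, C(Circle, X)),
      ∀ (α : AddCircle (1 : ℝ)) (φ : Path b b),
        ∀ u ∈ Set.Icc (0 : ℝ) 1,
          T (α, φ) (Circle.exp (2 * Real.pi * u)) =
            AddCircle.liftIco 1 0 φ.extend ((u : AddCircle (1 : ℝ)) + α) :=
  ⟨Path.loopRotation X b, fun α φ u _ => Path.loopRotation_apply_exp α φ u⟩
end
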